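/- If u_k is a bounded sequence in H^1_0(B) (unit disk, gradient norm ≤ 1) such that for every sequence j_k ∈ ℕ the rescaled symmetric rearrangements r ↦ j_k^{-1/2} u_k^*(r^{j_k}) converge to zero in measure on B, then sup_{r∈(0,1)} u_k^*(r)/(1 + log(1/r))^{1/2} → 0, i.e., u_k → 0 in exp L^2. -/

import Mathlib

open MeasureTheory Metric Set Filter

noncomputable abbrev E2 := EuclideanSpace ℝ (Fin 2)

/-- The radial profile `u^*` of the symmetric decreasing rearrangement of `u`:
`u^*(r) = inf { s ≥ 0 : |{|u| > s}| ≤ π r² }`. -/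
noncomputable def rearr (u : E2 → ℝ) (r : ℝ) : ℝ :=
  sInf {s : ℝ | 0 ≤ s ∧ (volume {x : E2 | s < |u x|}).toReal ≤ Real.pi * r ^ 2}

/-!
Pick radii `r_k` almost attaining the supremum `F_k`, so that
`u_k^*(r_k) ≥ (F_k / 2) (1 + log (1/r_k))^{1/2}`, and set `j_k = ⌈log (1/r_k)⌉`. For
`0 < |z| < e⁻¹` we have `|z|^{j_k} ≤ e^{-j_k} ≤ r_k`, so by monotonicity of `u_k^*` and
`j_k ≤ 1 + log (1/r_k)` the rescaled rearrangement `j_k^{-1/2} u_k^*(|z|^{j_k})` is at least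
`F_k / 2` on the punctured disk of radius `e⁻¹`. That set has a fixed positive measure, so
convergence in measure to zero forces `F_k → 0`.
-/

open Topology

theorem tendsto_measure_lt_abs_atTop {α : Type*} [MeasurableSpace α] {μ : Measure α}
    {u : α → ℝ} (hu : Measurable u) (hfin : μ (Function.support u) ≠ ⊤) :
    Tendsto (fun s : ℝ => μ {x | s < |u x|}) atTop (𝓝 0) := by
  have hanti : Antitone fun s : ℝ => {x | s < |u x|} := fun s t hst x hx => hst.trans_lt hx
  have hempty : ⋂ s : ℝ, {x | s < |u x|} = ∅ :=
    eq_empty_of_forall_notMem fun x hx => lt_irrefl |u x| (mem_iInter.1 hx |u x|)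
  have hzero : {x | (0 : ℝ) < |u x|} = Function.support u := by ext; simp
  have := tendsto_measure_iInter_atTop
    (fun s => (measurableSet_lt measurable_const hu.abs).nullMeasurableSet) hanti
    ⟨0, hzero ▸ hfin⟩
  rwa [hempty, measure_empty] at this

theorem exists_iSup_le_two_mul {ι : Type*} [Nonempty ι] {f : ι → ℝ} (hf : ∀ i, 0 ≤ f i) :
    ∃ i, ⨆ i, f i ≤ 2 * f i := by
  rcases (Real.iSup_nonneg hf).eq_or_lt with h | h
  · exact ⟨Classical.arbitrary ι, by rw [← h]; linarith [hf (Classical.arbitrary ι)]⟩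
  · obtain ⟨i, hi⟩ := exists_lt_of_lt_ciSup (half_lt_self h)
    exact ⟨i, by linarith⟩

theorem TendstoInMeasure.tendsto_of_le_norm_on {α ι E : Type*} [MeasurableSpace α]
    [NormedAddCommGroup E] {μ : Measure α} {l : Filter ι} {f : ι → α → E}
    (hf : TendstoInMeasure μ f l fun _ => 0) {S : Set α} (hS : μ S ≠ 0) {c : ι → ℝ}
    (hc0 : ∀ i, 0 ≤ c i) (hc : ∀ i, ∀ x ∈ S, c i ≤ ‖f i x‖) : Tendsto c l (𝓝 0) := by
  rw [Metric.tendsto_nhds]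
  intro ε hε
  filter_upwards [(hf (ENNReal.ofReal ε) (by positivity)).eventually
    (Iio_mem_nhds (pos_iff_ne_zero.2 hS))] with i hi
  rw [Real.dist_0_eq_abs, abs_of_nonneg (hc0 i)]
  by_contra! hεc
  refine hi.not_ge (measure_mono fun x hx => ?_)
  rw [mem_ofPred_eq, edist_zero_right, ← ofReal_norm]
  exact ENNReal.ofReal_le_ofReal (hεc.trans (hc i x hx))

theorem measure_restrict_ball_sdiff_singleton_ne_zero {X : Type*} [PseudoMetricSpace X]
    [MeasurableSpace X] [OpensMeasurableSpace X] (μ : Measure X) [μ.IsOpenPosMeasure]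
    [NullSingletonClass μ] (x : X) {ρ R : ℝ} (hρ : 0 < ρ) (hρR : ρ ≤ R) :
    μ.restrict (ball x R) (ball x ρ \ {x}) ≠ 0 := by
  rw [Measure.restrict_apply' measurableSet_ball,
    inter_eq_left.2 (sdiff_subset.trans (ball_subset_ball hρR)),
    measure_sdiff_null (measure_singleton x)]
  exact (measure_ball_pos μ x hρ).ne'

theorem AntitoneOn.div_sqrt_one_add_log_le {f : ℝ → ℝ} (hf : AntitoneOn f (Ioi 0)) {r ρ : ℝ}
    (hr : r ∈ Ioo 0 1) (hfr : 0 ≤ f r) (hρ : ρ ∈ Ioc 0 (Real.exp (-1))) :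
    f r / √(1 + Real.log (1 / r)) ≤
      (⌈Real.log (1 / r)⌉₊ : ℝ) ^ (-(1 : ℝ) / 2) * f (ρ ^ ⌈Real.log (1 / r)⌉₊) := by
  set L := Real.log (1 / r)
  set j := ⌈L⌉₊
  have hL : 0 < L := Real.log_pos (one_lt_one_div hr.1 hr.2)
  have hj : (0 : ℝ) < j := Nat.cast_pos.2 (Nat.ceil_pos.2 hL)
  have hρj : ρ ^ j ≤ r :=
    calc ρ ^ j ≤ Real.exp (-1) ^ j := pow_le_pow_left₀ hρ.1.le hρ.2 j
      _ = Real.exp (-j) := by rw [← Real.exp_nat_mul]; ring_nf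
      _ ≤ Real.exp (-L) := Real.exp_le_exp.2 (neg_le_neg (Nat.le_ceil L))
      _ = r := by rw [Real.exp_neg, Real.exp_log (by simpa using hr.1), one_div, inv_inv]
  have hmono : f r ≤ f (ρ ^ j) := hf (pow_pos hρ.1 j) hr.1 hρj
  have hsqrt : √j ≤ √(1 + L) := Real.sqrt_le_sqrt (by linarith [Nat.ceil_lt_add_one hL.le])
  calc f r / √(1 + L) ≤ f (ρ ^ j) / √(1 + L) := by gcongr
    _ ≤ f (ρ ^ j) / √j := div_le_div_of_nonneg_left (hfr.trans hmono) (Real.sqrt_pos.2 hj) hsqrt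
    _ = (j : ℝ) ^ (-(1 : ℝ) / 2) * f (ρ ^ j) := by
      rw [neg_div, Real.rpow_neg hj.le, ← Real.sqrt_eq_rpow, div_eq_inv_mul]

theorem rearr_nonneg (u : E2 → ℝ) (r : ℝ) : 0 ≤ rearr u r :=
  Real.sInf_nonneg fun _ hs => hs.1

theorem rearr_antitoneOn {u : E2 → ℝ} (hu : Measurable u)
    (hfin : volume (Function.support u) ≠ ⊤) : AntitoneOn (rearr u) (Ioi 0) := by
  intro a ha b _ hab
  have hlevel :
      ∀ᶠ s in atTop, 0 ≤ s ∧ volume {x | s < |u x|} < ENNReal.ofReal (Real.pi * a ^ 2) :=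
    (eventually_ge_atTop 0).and <| (tendsto_measure_lt_abs_atTop hu hfin).eventually
      (Iio_mem_nhds (by simpa [Real.pi_pos] using pow_pos (mem_Ioi.1 ha) 2))
  obtain ⟨s, hs0, hs⟩ := hlevel.exists
  refine csInf_le_csInf ⟨0, fun _ ht => ht.1⟩
    ⟨s, hs0, ENNReal.toReal_le_of_le_ofReal (by positivity) hs.le⟩
    fun t ht => ⟨ht.1, ht.2.trans (by gcongr; exact le_of_lt ha)⟩

theorem convergence_in_measure_implies_expL2_general
    (u : ℕ → E2 → ℝ)
    (hmeas : ∀ k, Measurable (u k))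
    (hsupp : ∀ k, tsupport (u k) ⊆ closedBall (0 : E2) 1)
    (hmeasure : ∀ j : ℕ → ℕ, (∀ k, 1 ≤ j k) →
      TendstoInMeasure (volume.restrict (ball (0 : E2) 1))
        (fun k => fun z : E2 => ((j k : ℝ)) ^ (-(1:ℝ)/2) * rearr (u k) (‖z‖ ^ (j k)))
        atTop (fun _ => (0:ℝ))) :
    Tendsto
      (fun k => ⨆ r : Set.Ioo (0:ℝ) 1, rearr (u k) r / Real.sqrt (1 + Real.log (1/(r:ℝ))))
      atTop (nhds 0) := by
  set F : ℕ → ℝ := fun k =>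
    ⨆ r : Ioo (0 : ℝ) 1, rearr (u k) r / √(1 + Real.log (1 / (r : ℝ)))
  have hanti (k : ℕ) : AntitoneOn (rearr (u k)) (Ioi 0) :=
    rearr_antitoneOn (hmeas k) (measure_mono ((subset_tsupport _).trans (hsupp k))
      |>.trans_lt measure_closedBall_lt_top).ne
  have hratio (k : ℕ) (r : Ioo (0 : ℝ) 1) : 0 ≤ rearr (u k) r / √(1 + Real.log (1 / (r : ℝ))) :=
    div_nonneg (rearr_nonneg _ _) (Real.sqrt_nonneg _)
  have := nonempty_Ioo_subtype (zero_lt_one' ℝ)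
  choose r hr using fun k => exists_iSup_le_two_mul (hratio k)
  set j : ℕ → ℕ := fun k => ⌈Real.log (1 / (r k : ℝ))⌉₊
  have hj (k : ℕ) : 1 ≤ j k := Nat.ceil_pos.2 (Real.log_pos (one_lt_one_div (r k).2.1 (r k).2.2))
  set S : Set E2 := ball 0 (Real.exp (-1)) \ {0}
  have hS : volume.restrict (ball (0 : E2) 1) S ≠ 0 :=
    measure_restrict_ball_sdiff_singleton_ne_zero volume 0 (Real.exp_pos _)
      (Real.exp_lt_one_iff.2 neg_one_lt_zero).le
  have hbound (k : ℕ) (z : E2) (hz : z ∈ S) :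
      F k / 2 ≤ ‖(j k : ℝ) ^ (-(1 : ℝ) / 2) * rearr (u k) (‖z‖ ^ j k)‖ :=
    calc F k / 2 ≤ rearr (u k) (r k) / √(1 + Real.log (1 / (r k : ℝ))) := by linarith [hr k]
      _ ≤ _ := (hanti k).div_sqrt_one_add_log_le (r k).2 (rearr_nonneg _ _)
        ⟨norm_pos_iff.2 hz.2, (mem_ball_zero_iff.1 hz.1).le⟩
      _ ≤ _ := Real.le_norm_self _
  have hhalf := TendstoInMeasure.tendsto_of_le_norm_on (hmeasure j hj) hS
    (fun k => div_nonneg (Real.iSup_nonneg (hratio k)) zero_le_two) hbound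
  exact (mul_zero (2 : ℝ) ▸ hhalf.const_mul 2).congr fun k => mul_div_cancel₀ _ two_ne_zero

/-- If `u_k` is bounded in `H^1_0(B)` (unit disk, `‖∇u_k‖₂ ≤ 1`) and for every sequence
`j_k ∈ ℕ` the rescaled rearrangements `z ↦ j_k^{-1/2} u_k^*(|z|^{j_k})` converge to zero in
measure on `B`, then `sup_{r∈(0,1)} u_k^*(r)/(1 + log(1/r))^{1/2} → 0`, i.e. `u_k → 0` in
`exp L²`. -/
theorem convergence_in_measure_implies_expL2
    (u : ℕ → E2 → ℝ)
    (hmeas : ∀ k, Measurable (u k))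
    (hsupp : ∀ k, tsupport (u k) ⊆ closedBall (0 : E2) 1)
    (henergy : ∀ k, ∫ x in ball (0 : E2) 1, ‖fderiv ℝ (u k) x‖ ^ 2 ≤ 1)
    (hmeasure : ∀ j : ℕ → ℕ, (∀ k, 1 ≤ j k) →
      TendstoInMeasure (volume.restrict (ball (0 : E2) 1))
        (fun k => fun z : E2 => ((j k : ℝ)) ^ (-(1:ℝ)/2) * rearr (u k) (‖z‖ ^ (j k)))
        atTop (fun _ => (0:ℝ))) :
    Tendsto
      (fun k => ⨆ r : Set.Ioo (0:ℝ) 1, rearr (u k) r / Real.sqrt (1 + Real.log (1/(r:ℝ))))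
      atTop (nhds 0) :=
  convergence_in_measure_implies_expL2_general u hmeas hsupp hmeasure
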